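/- Let I and J be finite idempotent-complete categories and A : I ⥤ J a functor. Then A is open if and only if A is upwards stably surjective, i.e. for every x : I, every a : J and every f : A.obj x ⟶ a there exist y : I, u : x ⟶ y and an isomorphism e : A.obj y ≅ a with A.map u ≫ e.hom = f (equivalently, for every x : I the induced coslice functor Under x ⥤ Under (A.obj x) is essentially surjective). -/

import Mathlib

open CategoryTheory

universe u

/-- A functor `A : I ⥤ J` is open if for every `x : I`, every `a : J` and every
`f : A.obj x ⟶ a`, there exist `y : I`, `u : x ⟶ y` and morphisms `s : a ⟶ A.obj y`,
`r : A.obj y ⟶ a` such that `s ≫ r = 𝟙 a` and `f ≫ s = A.map u`. -/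
def IsOpenFunctor {I J : Type*} [Category I] [Category J] (A : I ⥤ J) : Prop :=
  ∀ (x : I) (a : J) (f : A.obj x ⟶ a),
    ∃ (y : I) (u : x ⟶ y) (s : a ⟶ A.obj y) (r : A.obj y ⟶ a),
      s ≫ r = 𝟙 a ∧ f ≫ s = A.map u

/-! Openness of `A`, applied to the retraction `r` of a retract `a ⇄ A y`, yields another retract
`a ⇄ A y'` (with section `s'`) and `u : y ⟶ y'` such that `A u = r ≫ s'`. Such lifts compose,
and `a` has only finitely many retracts of the form `A y`, so some retract `a ⇄ A y` admits
`w : y ⟶ y` with `A w = r ≫ s`. Since `I` is hom-finite, a power of `w` is idempotent, and it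
still maps to the idempotent `r ≫ s`; splitting it in `I` gives `z` with `A z ≅ a`. -/

theorem exists_ne_zero_isIdempotentElem_pow {M : Type*} [Monoid M] [Finite M] (x : M) :
    ∃ n ≠ 0, IsIdempotentElem (x ^ n) := by
  obtain ⟨i, j, hij, h⟩ := Finite.exists_ne_map_eq_of_infinite (x ^ · : ℕ → M)
  wlog hlt : i < j generalizing i j
  · exact this j i hij.symm h.symm (by omega)
  obtain ⟨p, rfl⟩ := Nat.exists_eq_add_of_lt hlt
  have periodic : ∀ m k, x ^ (i + k + (p + 1) * m) = x ^ (i + k) := by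
    intro m k
    induction m with
    | zero => simp
    | succ m ih =>
      rw [show i + k + (p + 1) * (m + 1) = i + p + 1 + (k + (p + 1) * m) by ring, pow_add,
        ← h, ← pow_add, ← add_assoc, ih]
  obtain ⟨k, hk⟩ : ∃ k, (p + 1) * (i + 1) = i + k := Nat.exists_eq_add_of_le (by nlinarith)
  refine ⟨(p + 1) * (i + 1), by positivity, ?_⟩
  calc x ^ ((p + 1) * (i + 1)) * x ^ ((p + 1) * (i + 1))
      = x ^ (i + k + (p + 1) * (i + 1)) := by rw [← pow_add, ← hk]
    _ = x ^ ((p + 1) * (i + 1)) := by rw [periodic, hk]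

theorem Finite.exists_rel_self_of_forall_exists_rel {α : Type*} [Finite α] (R : α → α → Prop)
    [IsTrans α R] (hR : ∀ a, ∃ b, R a b) (a : α) : ∃ b, R a b ∧ R b b := by
  -- Otherwise the reverse of `R` is well-founded on the `R`-successors of `a`, which is absurd.
  by_contra! h
  let R' : {b // R a b} → {b // R a b} → Prop := fun b c => R c b
  have : IsTrans _ R' := ⟨fun _ _ _ h₁ h₂ => IsTrans.trans (r := R) _ _ _ h₂ h₁⟩
  have : Std.Irrefl R' := ⟨fun b => h b.1 b.2⟩
  obtain ⟨b, -, hb⟩ := (Finite.wellFounded_of_trans_of_irrefl R').has_min Set.univ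
    ⟨⟨_, (hR a).choose_spec⟩, trivial⟩
  obtain ⟨c, hc⟩ := hR b
  exact hb ⟨c, _root_.trans b.2 hc⟩ trivial hc

namespace CategoryTheory

variable {C D : Type*} [Category C] [Category D]

instance Retract.finite {X Y : C} [Finite (X ⟶ Y)] [Finite (Y ⟶ X)] : Finite (Retract X Y) :=
  Finite.of_injective (fun h => (h.i, h.r)) fun
    | ⟨_, _, _⟩, ⟨_, _, _⟩, rfl => rfl

@[simps]
def Retract.isoOfIdempotentEq {X X' Y : C} (h : Retract X Y) (h' : Retract X' Y)
    (w : h.r ≫ h.i = h'.r ≫ h'.i) : X ≅ X' where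
  hom := h.i ≫ h'.r
  inv := h'.i ≫ h.r
  hom_inv_id := by simp [← reassoc_of% w]
  inv_hom_id := by simp [reassoc_of% w]

theorem Functor.exists_iso_of_map_eq_of_idempotent [IsIdempotentComplete C] (F : C ⥤ D) {Y : C}
    {a : D} (ρ : Retract a (F.obj Y)) (e : End Y) (he : IsIdempotentElem e)
    (hFe : F.map e = ρ.r ≫ ρ.i) :
    ∃ (Z : C) (p : Y ⟶ Z) (φ : F.obj Z ≅ a), F.map p ≫ φ.hom = ρ.r := by
  obtain ⟨Z, i, p, hip, hpi⟩ := IsIdempotentComplete.idempotents_split Y e he.eq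
  let σ : Retract (F.obj Z) (F.obj Y) := Retract.map ⟨i, p, hip⟩ F
  have hσ : σ.r ≫ σ.i = ρ.r ≫ ρ.i := by simp [σ, ← F.map_comp, hpi, hFe]
  refine ⟨Z, p, σ.isoOfIdempotentEq ρ hσ, ?_⟩
  simp [σ, ← F.map_comp_assoc, hpi, hFe]

theorem Functor.exists_iso_of_map_eq_of_finite [IsIdempotentComplete C] (F : C ⥤ D) {Y : C}
    [Finite (Y ⟶ Y)] {a : D} (ρ : Retract a (F.obj Y)) (w : End Y)
    (hFw : F.map w = ρ.r ≫ ρ.i) :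
    ∃ (Z : C) (p : Y ⟶ Z) (φ : F.obj Z ≅ a), F.map p ≫ φ.hom = ρ.r := by
  have : Finite (End Y) := ‹Finite (Y ⟶ Y)›
  obtain ⟨n, hn, hwn⟩ := exists_ne_zero_isIdempotentElem_pow w
  have hFw_idem : IsIdempotentElem (F.mapEnd Y w) := by
    simp [IsIdempotentElem, End.mul_def, Functor.mapEnd, hFw]
  refine F.exists_iso_of_map_eq_of_idempotent ρ (w ^ n) hwn ?_
  change F.mapEnd Y (w ^ n) = _
  rw [map_pow, hFw_idem.pow_eq hn]
  exact hFw

end CategoryTheory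

namespace IsOpenFunctor

variable {I J : Type*} [Category I] [Category J] {A : I ⥤ J}

theorem exists_retract_with_idempotent_lift [Finite I] [∀ X Y : J, Finite (X ⟶ Y)]
    (hA : IsOpenFunctor A) {x : I} {a : J} (f : A.obj x ⟶ a) :
    ∃ (y : I) (ρ : Retract a (A.obj y)) (v : x ⟶ y) (w : y ⟶ y),
      A.map v = f ≫ ρ.i ∧ A.map w = ρ.r ≫ ρ.i := by
  let Lifts (ρ ρ' : Σ y, Retract a (A.obj y)) : Prop :=
    ∃ u : ρ.1 ⟶ ρ'.1, A.map u = ρ.2.r ≫ ρ'.2.i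
  have : IsTrans _ Lifts := ⟨fun _ _ _ ⟨u, hu⟩ ⟨u', hu'⟩ =>
    ⟨u ≫ u', by simp [hu, hu']⟩⟩
  obtain ⟨y₀, u₀, s₀, r₀, hsr₀, hu₀⟩ := hA x a f
  obtain ⟨⟨y, ρ⟩, ⟨u, hu⟩, ⟨w, hw⟩⟩ := Finite.exists_rel_self_of_forall_exists_rel Lifts
    (fun ⟨y, ρ⟩ => by
      obtain ⟨y', u, s, r, hsr, hu⟩ := hA y a ρ.r
      exact ⟨⟨y', ⟨s, r, hsr⟩⟩, u, hu.symm⟩)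
    ⟨y₀, ⟨s₀, r₀, hsr₀⟩⟩
  refine ⟨y, ρ, u₀ ≫ u, w, ?_, hw⟩
  simp [hu, ← hu₀, reassoc_of% hsr₀]

end IsOpenFunctor

theorem stmt_10_general (I J : Type u) [SmallCategory I] [FinCategory I] [IsIdempotentComplete I]
    [SmallCategory J] [FinCategory J] (A : I ⥤ J) :
    IsOpenFunctor A ↔
      ∀ (x : I) (a : J) (f : A.obj x ⟶ a),
        ∃ (y : I) (u : x ⟶ y) (e : A.obj y ≅ a), A.map u ≫ e.hom = f := by
  refine ⟨fun hA x a f => ?_, fun h x a f => ?_⟩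
  · obtain ⟨y, ρ, v, w, hv, hw⟩ := hA.exists_retract_with_idempotent_lift f
    obtain ⟨z, p, φ, hp⟩ := A.exists_iso_of_map_eq_of_finite ρ w hw
    exact ⟨z, v ≫ p, φ, by simp [hp, hv]⟩
  · obtain ⟨y, u, e, he⟩ := h x a f
    exact ⟨y, u, e.inv, e.hom, e.inv_hom_id, by simp [← he]⟩

theorem stmt_10 (I J : Type u) [SmallCategory I] [FinCategory I] [IsIdempotentComplete I]
    [SmallCategory J] [FinCategory J] [IsIdempotentComplete J] (A : I ⥤ J) :
    IsOpenFunctor A ↔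
      ∀ (x : I) (a : J) (f : A.obj x ⟶ a),
        ∃ (y : I) (u : x ⟶ y) (e : A.obj y ≅ a), A.map u ≫ e.hom = f :=
  stmt_10_general I J A
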